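/- arXiv:2204.08273 — 8 statements merged into one kernel-verified Lean document; each statement's English description precedes it below -/
import Mathlib

section
/- Q = H M, i.e., the block matrix Q factors as the product of H and M. -/
open Matrix

section
variable {K β ℓ : Type*} [Field K] [Fintype β] [Fintype ℓ] [DecidableEq β] [DecidableEq ℓ]

theorem fromBlocks_Q_eq_H_mul_M (ρ g : K) (hρ : ρ ≠ 0) (hg : g ≠ 0)
    (P : Matrix β β K) (A : Matrix ℓ β K) :
    fromBlocks (ρ • (Aᵀ * A) + P) ((1 - g) • Aᵀ) (-A) ((1 / ρ) • (1 : Matrix ℓ ℓ K)) =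
      fromBlocks (P + (ρ / g) • (Aᵀ * A)) (((1 - g) / g) • Aᵀ)
          (((1 - g) / g) • A) ((1 / (g * ρ)) • (1 : Matrix ℓ ℓ K)) *
        fromBlocks 1 0 (-(ρ • A)) (g • (1 : Matrix ℓ ℓ K)) := by
  rw [fromBlocks_multiply, fromBlocks_inj]
  simp only [Matrix.mul_one, Matrix.mul_zero, zero_add, Matrix.mul_neg, Matrix.mul_smul,
    Matrix.smul_mul, Matrix.one_mul, smul_smul]
  refine ⟨?_, ?_, ?_, ?_⟩ <;> match_scalars
  all_goals field_simp
  all_goals ring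

end

theorem stmt0_general
    {α β ℓ : Type*} [Fintype α] [Fintype β] [Fintype ℓ]
    [DecidableEq α] [DecidableEq β] [DecidableEq ℓ]
    (ρ g : ℝ) (hρ : 0 < ρ) (hg : g ∈ Set.Ioo (0:ℝ) 2)
    (G₁ : Matrix α α ℝ)
    (Pm : Matrix β β ℝ)
    (A : Matrix ℓ β ℝ) :
    (Matrix.fromBlocks G₁ 0 0
        (Matrix.fromBlocks (ρ • (Aᵀ * A) + Pm) ((1 - g) • Aᵀ)
          (-A) ((1 / ρ) • (1 : Matrix ℓ ℓ ℝ))) :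
      Matrix (α ⊕ (β ⊕ ℓ)) (α ⊕ (β ⊕ ℓ)) ℝ) =
    (Matrix.fromBlocks G₁ 0 0
        (Matrix.fromBlocks (Pm + (ρ / g) • (Aᵀ * A)) (((1 - g) / g) • Aᵀ)
          (((1 - g) / g) • A) ((1 / (g * ρ)) • (1 : Matrix ℓ ℓ ℝ)))) *
    (Matrix.fromBlocks 1 0 0
        (Matrix.fromBlocks (1 : Matrix β β ℝ) 0
          (-(ρ • A)) (g • (1 : Matrix ℓ ℓ ℝ)))) := by
  rw [fromBlocks_multiply, ← fromBlocks_Q_eq_H_mul_M ρ g hρ.ne' hg.1.ne']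
  simp

theorem stmt0
    {α β ℓ : Type*} [Fintype α] [Fintype β] [Fintype ℓ]
    [DecidableEq α] [DecidableEq β] [DecidableEq ℓ]
    (ρ g : ℝ) (hρ : 0 < ρ) (hg : g ∈ Set.Ioo (0:ℝ) 2)
    (G₁ : Matrix α α ℝ) (hG₁ : G₁.IsSymm)
    (Pm : Matrix β β ℝ) (hPm : Pm.IsSymm)
    (A : Matrix ℓ β ℝ) :
    (Matrix.fromBlocks G₁ 0 0
        (Matrix.fromBlocks (ρ • (Aᵀ * A) + Pm) ((1 - g) • Aᵀ)
          (-A) ((1 / ρ) • (1 : Matrix ℓ ℓ ℝ))) :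
      Matrix (α ⊕ (β ⊕ ℓ)) (α ⊕ (β ⊕ ℓ)) ℝ) =
    (Matrix.fromBlocks G₁ 0 0
        (Matrix.fromBlocks (Pm + (ρ / g) • (Aᵀ * A)) (((1 - g) / g) • Aᵀ)
          (((1 - g) / g) • A) ((1 / (g * ρ)) • (1 : Matrix ℓ ℓ ℝ)))) *
    (Matrix.fromBlocks 1 0 0
        (Matrix.fromBlocks (1 : Matrix β β ℝ) 0
          (-(ρ • A)) (g • (1 : Matrix ℓ ℓ ℝ)))) :=
  stmt0_general ρ g hρ hg G₁ Pm A
end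

section
/- The matrix N := Qᵀ + Q − MᵀHM equals the block diagonal matrix diag(G₁, P_m, ((2−γ)/ρ) I_ℓ). -/
/-!
The metric `H` factors the prediction matrix as `Q = H M`, so `Mᵀ H M = Mᵀ Q`, and
`Qᵀ + Q - Mᵀ Q` is a direct block computation: the `G₁` block decouples, and on the
`(x_m, λ)` block the `Aᵀ A` and `A` terms cancel, leaving `P_m` and `((2 - γ)/ρ) I`.
-/

open Matrix

theorem Matrix.fromBlocks_sub {l m n o R : Type*} [Sub R] (A : Matrix n l R) (B : Matrix n m R)
    (C : Matrix o l R) (D : Matrix o m R) (A' : Matrix n l R) (B' : Matrix n m R)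
    (C' : Matrix o l R) (D' : Matrix o m R) :
    fromBlocks A B C D - fromBlocks A' B' C' D' = fromBlocks (A - A') (B - B') (C - C') (D - D') := by
  ext (i | i) (j | j) <;> rfl

section LinearizedADMM

variable {K β ℓ : Type*} [Field K] [Fintype β] [Fintype ℓ] [DecidableEq β] [DecidableEq ℓ]

-- The `(x_m, λ)` blocks of `Q`, `M` and `H`, with `g` standing for `γ`.
def admmQ (ρ g : K) (P : Matrix β β K) (A : Matrix ℓ β K) : Matrix (β ⊕ ℓ) (β ⊕ ℓ) K :=
  fromBlocks (ρ • (Aᵀ * A) + P) ((1 - g) • Aᵀ) (-A) ((1 / ρ) • 1)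

def admmM (ρ g : K) (A : Matrix ℓ β K) : Matrix (β ⊕ ℓ) (β ⊕ ℓ) K :=
  fromBlocks 1 0 (-(ρ • A)) (g • 1)

def admmH (ρ g : K) (P : Matrix β β K) (A : Matrix ℓ β K) : Matrix (β ⊕ ℓ) (β ⊕ ℓ) K :=
  fromBlocks (P + (ρ / g) • (Aᵀ * A)) (((1 - g) / g) • Aᵀ)
    (((1 - g) / g) • A) ((1 / (g * ρ)) • 1)

variable {ρ g : K} {P : Matrix β β K} {A : Matrix ℓ β K}

theorem admmH_mul_admmM (hρ : ρ ≠ 0) (hg : g ≠ 0) :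
    admmH ρ g P A * admmM ρ g A = admmQ ρ g P A := by
  simp only [admmH, admmQ, admmM, fromBlocks_multiply, Matrix.mul_one, Matrix.mul_zero,
    Matrix.mul_neg, Matrix.mul_smul, Matrix.smul_mul, Matrix.one_mul, smul_smul, zero_add,
    fromBlocks_inj]
  refine ⟨?_, ?_, ?_, ?_⟩ <;> match_scalars <;> field_simp <;> ring

theorem admmQ_transpose_add_sub (hρ : ρ ≠ 0) (hP : P.IsSymm) :
    (admmQ ρ g P A)ᵀ + admmQ ρ g P A - (admmM ρ g A)ᵀ * admmQ ρ g P A =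
      fromBlocks P 0 0 (((2 - g) / ρ) • 1) := by
  simp only [admmQ, admmM, fromBlocks_transpose, fromBlocks_multiply, fromBlocks_add,
    fromBlocks_sub, transpose_add, transpose_smul, transpose_mul, transpose_transpose,
    transpose_neg, transpose_one, transpose_zero, hP.eq, Matrix.mul_one, Matrix.one_mul,
    Matrix.zero_mul, Matrix.mul_neg, Matrix.neg_mul, Matrix.mul_smul, Matrix.smul_mul, smul_smul,
    zero_add, fromBlocks_inj]
  refine ⟨?_, ?_, ?_, ?_⟩ <;> match_scalars <;> field_simp <;> ring

end LinearizedADMM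

theorem stmt2
    {α β ℓ : Type*} [Fintype α] [Fintype β] [Fintype ℓ]
    [DecidableEq α] [DecidableEq β] [DecidableEq ℓ]
    (ρ g : ℝ) (hρ : 0 < ρ) (hg : g ∈ Set.Ioo (0:ℝ) 2)
    (G₁ : Matrix α α ℝ) (hG₁ : G₁.IsSymm)
    (Pm : Matrix β β ℝ) (hPm : Pm.IsSymm)
    (A : Matrix ℓ β ℝ) :
    letI Q : Matrix (α ⊕ (β ⊕ ℓ)) (α ⊕ (β ⊕ ℓ)) ℝ :=
      Matrix.fromBlocks G₁ 0 0
        (Matrix.fromBlocks (ρ • (Aᵀ * A) + Pm) ((1 - g) • Aᵀ)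
          (-A) ((1 / ρ) • (1 : Matrix ℓ ℓ ℝ)))
    letI M : Matrix (α ⊕ (β ⊕ ℓ)) (α ⊕ (β ⊕ ℓ)) ℝ :=
      Matrix.fromBlocks 1 0 0
        (Matrix.fromBlocks (1 : Matrix β β ℝ) 0
          (-(ρ • A)) (g • (1 : Matrix ℓ ℓ ℝ)))
    letI H : Matrix (α ⊕ (β ⊕ ℓ)) (α ⊕ (β ⊕ ℓ)) ℝ :=
      Matrix.fromBlocks G₁ 0 0
        (Matrix.fromBlocks (Pm + (ρ / g) • (Aᵀ * A)) (((1 - g) / g) • Aᵀ)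
          (((1 - g) / g) • A) ((1 / (g * ρ)) • (1 : Matrix ℓ ℓ ℝ)))
    Qᵀ + Q - Mᵀ * H * M =
      Matrix.fromBlocks G₁ 0 0
        (Matrix.fromBlocks Pm 0 0 (((2 - g) / ρ) • (1 : Matrix ℓ ℓ ℝ))) := by
  set Q := fromBlocks G₁ 0 0 (admmQ ρ g Pm A) with hQ
  set M := fromBlocks (1 : Matrix α α ℝ) 0 0 (admmM ρ g A) with hM
  set H := fromBlocks G₁ 0 0 (admmH ρ g Pm A)
  change Qᵀ + Q - Mᵀ * H * M = _
  have hHM : H * M = Q := by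
    rw [fromBlocks_multiply, admmH_mul_admmM hρ.ne' hg.1.ne']
    simp only [Matrix.mul_one, Matrix.mul_zero, Matrix.zero_mul, add_zero, zero_add, Q]
  calc Qᵀ + Q - Mᵀ * H * M = Qᵀ + Q - Mᵀ * Q := by rw [Matrix.mul_assoc, hHM]
    _ = _ := by
      simp only [hQ, hM, fromBlocks_transpose, fromBlocks_multiply, fromBlocks_add,
        fromBlocks_sub, transpose_zero, transpose_one, Matrix.one_mul, Matrix.mul_zero,
        Matrix.zero_mul, add_zero, zero_add, hG₁.eq, add_sub_cancel_right, sub_zero,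
        admmQ_transpose_add_sub hρ.ne' hPm]
end

section
/- If G₁ and P_m are positive definite and γ ∈ (0,2), ρ > 0, then the matrix N = Qᵀ + Q − MᵀHM is positive definite. -/
/-!
The matrices are related by `H M = Q`, so `N = Qᵀ + Q - Mᵀ Q`, and in this form all the
`A_m`-terms cancel: `N` is block diagonal with blocks `G₁ᵀ`, `P_mᵀ` and `((2 - γ)/ρ) I`, each of
which is positive definite.
-/

open Matrix

theorem Matrix.PosDef.fromBlocks_zero {m n R : Type*} [Fintype m] [Fintype n]
    [CommRing R] [PartialOrder R] [StarRing R] [IsOrderedRing R]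
    {A : Matrix m m R} {D : Matrix n n R} (hA : A.PosDef) (hD : D.PosDef) :
    (fromBlocks A 0 0 D).PosDef := by
  refine .of_dotProduct_mulVec_pos
    (isHermitian_fromBlocks_iff.2 ⟨hA.1, by simp, by simp, hD.1⟩) fun x hx => ?_
  rw [fromBlocks_mulVec, dotProduct_block]
  simp only [zero_mulVec, add_zero, zero_add, Sum.elim_comp_inl, Sum.elim_comp_inr]
  have hA₀ := hA.posSemidef.dotProduct_mulVec_nonneg (x ∘ Sum.inl)
  have hD₀ := hD.posSemidef.dotProduct_mulVec_nonneg (x ∘ Sum.inr)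
  by_cases hl : x ∘ Sum.inl = 0
  · have hr : x ∘ Sum.inr ≠ 0 := fun hr => hx <| by
      rw [← Sum.elim_comp_inl_inr x, hl, hr, Sum.elim_zero_zero]
    exact add_pos_of_nonneg_of_pos hA₀ (hD.dotProduct_mulVec_pos hr)
  · exact add_pos_of_pos_of_nonneg (hA.dotProduct_mulVec_pos hl) hD₀

namespace ADMM

variable {K α β ℓ : Type*} [Field K] [Fintype α] [Fintype β] [Fintype ℓ]
  [DecidableEq α] [DecidableEq β] [DecidableEq ℓ]
  (ρ γ : K) (G₁ : Matrix α α K) (Pm : Matrix β β K) (A : Matrix ℓ β K)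

def Q : Matrix (α ⊕ (β ⊕ ℓ)) (α ⊕ (β ⊕ ℓ)) K :=
  fromBlocks G₁ 0 0
    (fromBlocks (ρ • (Aᵀ * A) + Pm) ((1 - γ) • Aᵀ) (-A) ((1 / ρ) • (1 : Matrix ℓ ℓ K)))

def M : Matrix (α ⊕ (β ⊕ ℓ)) (α ⊕ (β ⊕ ℓ)) K :=
  fromBlocks 1 0 0 (fromBlocks (1 : Matrix β β K) 0 (-(ρ • A)) (γ • (1 : Matrix ℓ ℓ K)))

def H : Matrix (α ⊕ (β ⊕ ℓ)) (α ⊕ (β ⊕ ℓ)) K :=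
  fromBlocks G₁ 0 0
    (fromBlocks (Pm + (ρ / γ) • (Aᵀ * A)) (((1 - γ) / γ) • Aᵀ)
      (((1 - γ) / γ) • A) ((1 / (γ * ρ)) • (1 : Matrix ℓ ℓ K)))

variable {ρ γ}

theorem H_mul_M (hρ : ρ ≠ 0) (hγ : γ ≠ 0) : H ρ γ G₁ Pm A * M ρ γ A = Q ρ γ G₁ Pm A := by
  simp only [H, M, Q, fromBlocks_multiply, Matrix.mul_one, Matrix.mul_zero, Matrix.zero_mul,
    add_zero, zero_add, Matrix.mul_neg, Matrix.mul_smul, Matrix.smul_mul, Matrix.one_mul,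
    smul_smul, fromBlocks_inj, true_and]
  refine ⟨?_, ?_, ?_, ?_⟩ <;> match_scalars <;> field_simp <;> ring

theorem transpose_Q_add_Q_sub_transpose_M_mul_Q (hρ : ρ ≠ 0) :
    (Q ρ γ G₁ Pm A)ᵀ + Q ρ γ G₁ Pm A - (M ρ γ A)ᵀ * Q ρ γ G₁ Pm A =
      fromBlocks G₁ᵀ 0 0 (fromBlocks Pmᵀ 0 0 (((2 - γ) / ρ) • (1 : Matrix ℓ ℓ K))) := by
  rw [sub_eq_iff_eq_add]
  simp only [Q, M, fromBlocks_transpose, fromBlocks_multiply, fromBlocks_add, transpose_add,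
    transpose_smul, transpose_neg, transpose_mul, transpose_transpose, transpose_one,
    transpose_zero, Matrix.mul_zero, Matrix.zero_mul, Matrix.one_mul, add_zero, zero_add,
    fromBlocks_inj, true_and]
  refine ⟨?_, ?_, ?_, ?_⟩ <;>
    simp only [Matrix.neg_mul, Matrix.mul_neg, neg_neg, Matrix.smul_mul, Matrix.mul_smul,
      Matrix.one_mul, Matrix.mul_one, smul_smul] <;>
    match_scalars <;> field_simp <;> ring

end ADMM

theorem stmt3
    {α β ℓ : Type*} [Fintype α] [Fintype β] [Fintype ℓ]
    [DecidableEq α] [DecidableEq β] [DecidableEq ℓ]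
    (ρ g : ℝ) (hρ : 0 < ρ) (hg : g ∈ Set.Ioo (0:ℝ) 2)
    (G₁ : Matrix α α ℝ) (hG₁ : G₁.PosDef)
    (Pm : Matrix β β ℝ) (hPm : Pm.PosDef)
    (A : Matrix ℓ β ℝ) :
    letI Q : Matrix (α ⊕ (β ⊕ ℓ)) (α ⊕ (β ⊕ ℓ)) ℝ :=
      Matrix.fromBlocks G₁ 0 0
        (Matrix.fromBlocks (ρ • (Aᵀ * A) + Pm) ((1 - g) • Aᵀ)
          (-A) ((1 / ρ) • (1 : Matrix ℓ ℓ ℝ)))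
    letI M : Matrix (α ⊕ (β ⊕ ℓ)) (α ⊕ (β ⊕ ℓ)) ℝ :=
      Matrix.fromBlocks 1 0 0
        (Matrix.fromBlocks (1 : Matrix β β ℝ) 0
          (-(ρ • A)) (g • (1 : Matrix ℓ ℓ ℝ)))
    letI H : Matrix (α ⊕ (β ⊕ ℓ)) (α ⊕ (β ⊕ ℓ)) ℝ :=
      Matrix.fromBlocks G₁ 0 0
        (Matrix.fromBlocks (Pm + (ρ / g) • (Aᵀ * A)) (((1 - g) / g) • Aᵀ)
          (((1 - g) / g) • A) ((1 / (g * ρ)) • (1 : Matrix ℓ ℓ ℝ)))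
    (Qᵀ + Q - Mᵀ * H * M).PosDef := by
  change (ADMM.Q ρ g G₁ Pm A)ᵀ + ADMM.Q ρ g G₁ Pm A -
    (ADMM.M ρ g A)ᵀ * ADMM.H ρ g G₁ Pm A * ADMM.M ρ g A |>.PosDef
  rw [Matrix.mul_assoc, ADMM.H_mul_M _ _ _ hρ.ne' hg.1.ne',
    ADMM.transpose_Q_add_Q_sub_transpose_M_mul_Q _ _ _ hρ.ne']
  have hcoeff : 0 < (2 - g) / ρ := div_pos (by linarith [hg.2]) hρ
  exact hG₁.transpose.fromBlocks_zero <| hPm.transpose.fromBlocks_zero <| PosDef.one.smul hcoeff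
end

section
/- Let F: ℝⁿ → ℝⁿ be a monotone map and θ: ℝⁿ → ℝ convex. If w̄, w̃ ∈ W and Q is a matrix such that θ(u) − θ(ū) + (w − w̄)ᵀF(w̄) ≥ (w − w̄)ᵀQ(v − w̄) holds for all w ∈ W with data (ū, w̄, v) = (ū, w̄, wᵏ) and also with the shifted data (ũ, w̃, wᵏ⁺¹), then (w̄ − w̃)ᵀ Q [(wᵏ − wᵏ⁺¹) − (w̄ − w̃)] ≥ 0. -/
open Matrix

/-- Testing each of two variational bounds at the other point cancels `θ`. -/
lemma dotProduct_sub_le_of_variational_bounds {n : Type*} [Fintype n]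
    {W : Set (n → ℝ)} {F : (n → ℝ) → (n → ℝ)} {θ : (n → ℝ) → ℝ} {wb wt rb rt : n → ℝ}
    (hwb : wb ∈ W) (hwt : wt ∈ W)
    (hb : ∀ w ∈ W, θ w - θ wb + (w - wb) ⬝ᵥ F wb ≥ (w - wb) ⬝ᵥ rb)
    (ht : ∀ w ∈ W, θ w - θ wt + (w - wt) ⬝ᵥ F wt ≥ (w - wt) ⬝ᵥ rt) :
    (wb - wt) ⬝ᵥ (F wb - F wt) ≤ (wb - wt) ⬝ᵥ (rb - rt) := by
  have hb' := hb wt hwt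
  have ht' := ht wb hwb
  rw [← neg_sub wb wt, neg_dotProduct, neg_dotProduct] at hb'
  rw [dotProduct_sub, dotProduct_sub]
  linarith

theorem stmt8_general
    {n : Type*} [Fintype n]
    (W : Set (n → ℝ))
    (F : (n → ℝ) → (n → ℝ))
    (hF : ∀ w₁ ∈ W, ∀ w₂ ∈ W, 0 ≤ (w₁ - w₂) ⬝ᵥ (F w₁ - F w₂))
    (θ : (n → ℝ) → ℝ)
    (Q : Matrix n n ℝ)
    (wb wt wk wk1 : n → ℝ) (hwb : wb ∈ W) (hwt : wt ∈ W)
    (h1 : ∀ w ∈ W, θ w - θ wb + (w - wb) ⬝ᵥ F wb ≥ (w - wb) ⬝ᵥ Q.mulVec (wk - wb))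
    (h2 : ∀ w ∈ W, θ w - θ wt + (w - wt) ⬝ᵥ F wt ≥ (w - wt) ⬝ᵥ Q.mulVec (wk1 - wt)) :
    (wb - wt) ⬝ᵥ Q.mulVec ((wk - wk1) - (wb - wt)) ≥ 0 := by
  have hsplit : (wk - wk1) - (wb - wt) = (wk - wb) - (wk1 - wt) := by abel
  rw [hsplit, mulVec_sub]
  exact (hF wb hwb wt hwt).trans (dotProduct_sub_le_of_variational_bounds hwb hwt h1 h2)

theorem stmt8
    {n : Type*} [Fintype n] [DecidableEq n]
    (W : Set (n → ℝ)) (hW : Convex ℝ W)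
    (F : (n → ℝ) → (n → ℝ))
    (hF : ∀ w₁ ∈ W, ∀ w₂ ∈ W, 0 ≤ (w₁ - w₂) ⬝ᵥ (F w₁ - F w₂))
    (θ : (n → ℝ) → ℝ) (hθ : ConvexOn ℝ W θ)
    (Q : Matrix n n ℝ)
    (wb wt wk wk1 : n → ℝ) (hwb : wb ∈ W) (hwt : wt ∈ W)
    (h1 : ∀ w ∈ W, θ w - θ wb + (w - wb) ⬝ᵥ F wb ≥ (w - wb) ⬝ᵥ Q.mulVec (wk - wb))
    (h2 : ∀ w ∈ W, θ w - θ wt + (w - wt) ⬝ᵥ F wt ≥ (w - wt) ⬝ᵥ Q.mulVec (wk1 - wt)) :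
    (wb - wt) ⬝ᵥ Q.mulVec ((wk - wk1) - (wb - wt)) ≥ 0 :=
  stmt8_general W F hF θ Q wb wt wk wk1 hwb hwt h1 h2
end

section
/- If (w − w̄ᵏ)ᵀ Q [(wᵏ − wᵏ⁺¹) − (w̄ᵏ − w̄ᵏ⁺¹)] ≥ 0 with w := w̄ᵏ⁺¹ replaced appropriately, then adding the quadratic identity gives (wᵏ − wᵏ⁺¹)ᵀ Q [(wᵏ − wᵏ⁺¹) − (w̄ᵏ − w̄ᵏ⁺¹)] ≥ ½‖(wᵏ − w̄ᵏ) − (wᵏ⁺¹ − w̄ᵏ⁺¹)‖²_{Qᵀ+Q}. -/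
open Matrix

section

variable {n R : Type*} [Fintype n]

theorem dotProduct_transpose_add_mulVec_self [CommRing R] (Q : Matrix n n R) (v : n → R) :
    v ⬝ᵥ (Qᵀ + Q) *ᵥ v = 2 * (v ⬝ᵥ Q *ᵥ v) := by
  rw [add_mulVec, dotProduct_add, dotProduct_mulVec, vecMul_transpose, dotProduct_comm, two_mul]

theorem half_dotProduct_transpose_add_mulVec_le [Field R] [LinearOrder R] [IsStrictOrderedRing R]
    (Q : Matrix n n R) (a b : n → R) (h : 0 ≤ b ⬝ᵥ Q *ᵥ (a - b)) :
    (1 / 2) * ((a - b) ⬝ᵥ (Qᵀ + Q) *ᵥ (a - b)) ≤ a ⬝ᵥ Q *ᵥ (a - b) := by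
  have hsplit : a ⬝ᵥ Q *ᵥ (a - b) = (a - b) ⬝ᵥ Q *ᵥ (a - b) + b ⬝ᵥ Q *ᵥ (a - b) := by
    rw [sub_dotProduct, sub_add_cancel]
  rw [dotProduct_transpose_add_mulVec_self, hsplit]
  linarith

end

theorem stmt9_general
    {n : Type*} [Fintype n]
    (Q : Matrix n n ℝ)
    (wk wk1 wbk wbk1 : n → ℝ)
    (h : (wbk - wbk1) ⬝ᵥ Q.mulVec ((wk - wk1) - (wbk - wbk1)) ≥ 0) :
    (wk - wk1) ⬝ᵥ Q.mulVec ((wk - wk1) - (wbk - wbk1)) ≥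
      (1 / 2) * (((wk - wbk) - (wk1 - wbk1)) ⬝ᵥ
        (Qᵀ + Q).mulVec ((wk - wbk) - (wk1 - wbk1))) := by
  have hdiff : (wk - wbk) - (wk1 - wbk1) = (wk - wk1) - (wbk - wbk1) := by abel
  rw [hdiff]
  exact half_dotProduct_transpose_add_mulVec_le Q _ _ h

theorem stmt9
    {n : Type*} [Fintype n] [DecidableEq n]
    (Q : Matrix n n ℝ)
    (wk wk1 wbk wbk1 : n → ℝ)
    (h : (wbk - wbk1) ⬝ᵥ Q.mulVec ((wk - wk1) - (wbk - wbk1)) ≥ 0) :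
    (wk - wk1) ⬝ᵥ Q.mulVec ((wk - wk1) - (wbk - wbk1)) ≥
      (1 / 2) * (((wk - wbk) - (wk1 - wbk1)) ⬝ᵥ
        (Qᵀ + Q).mulVec ((wk - wbk) - (wk1 - wbk1))) :=
  stmt9_general Q wk wk1 wbk wbk1 h
end

section
/- Suppose Q = HM with H symmetric positive definite, wᵏ − wᵏ⁺¹ = M(wᵏ − w̄ᵏ), wᵏ⁺¹ − wᵏ⁺² = M(wᵏ⁺¹ − w̄ᵏ⁺¹), and aᵀ MᵀHM (a − b) ≥ ½‖a − b‖²_{Qᵀ+Q} where a = wᵏ − w̄ᵏ, b = wᵏ⁺¹ − w̄ᵏ⁺¹. If additionally N := Qᵀ + Q − MᵀHM is positive semidefinite, then ‖wᵏ⁺¹ − wᵏ⁺²‖²_H ≤ ‖wᵏ − wᵏ⁺¹‖²_H. -/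
/-!
With `a = wᵏ - w̄ᵏ`, `b = wᵏ⁺¹ - w̄ᵏ⁺¹` and `G = MᵀHM`, the two `H`-norms are `aᵀGa` and `bᵀGb`.
Expanding `b = a - (a - b)` and using the hypothesis on the cross term,
`bᵀGb = aᵀGa - 2aᵀG(a - b) + (a - b)ᵀG(a - b) ≤ aᵀGa - (a - b)ᵀN(a - b) ≤ aᵀGa`.
-/

open Matrix

namespace Matrix

variable {m n R : Type*} [Fintype m]

lemma IsSymm.dotProduct_mulVec_comm [Fintype n] [CommSemiring R] {G : Matrix n n R}
    (hG : G.IsSymm) (x y : n → R) : x ⬝ᵥ G *ᵥ y = y ⬝ᵥ G *ᵥ x := by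
  rw [dotProduct_mulVec, ← mulVec_transpose, hG.eq, dotProduct_comm]

lemma IsSymm.transpose_mul_mul [CommSemiring R] {H : Matrix m m R} (hH : H.IsSymm)
    (M : Matrix m n R) : (Mᵀ * H * M).IsSymm := by
  simp only [IsSymm, transpose_mul, transpose_transpose, hH.eq, Matrix.mul_assoc]

lemma mulVec_dotProduct_mulVec_mulVec [Fintype n] [CommSemiring R] (H : Matrix m m R)
    (M : Matrix m n R) (x : n → R) : (M *ᵥ x) ⬝ᵥ H *ᵥ (M *ᵥ x) = x ⬝ᵥ (Mᵀ * H * M) *ᵥ x := by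
  rw [← mulVec_mulVec, ← mulVec_mulVec, dotProduct_mulVec x, vecMul_transpose]

lemma IsSymm.dotProduct_mulVec_self_eq_sub [Fintype n] [CommRing R] {G : Matrix n n R}
    (hG : G.IsSymm) (a b : n → R) : b ⬝ᵥ G *ᵥ b =
      a ⬝ᵥ G *ᵥ a - 2 * (a ⬝ᵥ G *ᵥ (a - b)) + (a - b) ⬝ᵥ G *ᵥ (a - b) := by
  simp only [mulVec_sub, dotProduct_sub, sub_dotProduct, hG.dotProduct_mulVec_comm b a]
  ring

theorem IsSymm.dotProduct_mulVec_self_le [Fintype n] [Field R] [LinearOrder R]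
    [IsStrictOrderedRing R] {G S : Matrix n n R} (hG : G.IsSymm)
    (hGS : ∀ d, d ⬝ᵥ G *ᵥ d ≤ d ⬝ᵥ S *ᵥ d) {a b : n → R}
    (hab : a ⬝ᵥ G *ᵥ (a - b) ≥ (1 / 2) * ((a - b) ⬝ᵥ S *ᵥ (a - b))) :
    b ⬝ᵥ G *ᵥ b ≤ a ⬝ᵥ G *ᵥ a := by
  rw [hG.dotProduct_mulVec_self_eq_sub a b]
  linarith [hGS (a - b)]

lemma PosSemidef.dotProduct_mulVec_le_of_sub [Fintype n] [CommRing R] [PartialOrder R]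
    [IsOrderedAddMonoid R] [StarRing R] [TrivialStar R] {G S : Matrix n n R}
    (h : (S - G).PosSemidef) (d : n → R) : d ⬝ᵥ G *ᵥ d ≤ d ⬝ᵥ S *ᵥ d := by
  simpa only [star_trivial, sub_mulVec, dotProduct_sub, sub_nonneg] using
    h.dotProduct_mulVec_nonneg d

end Matrix

theorem stmt10_general
    {n : Type*} [Fintype n]
    (H M Q : Matrix n n ℝ) (hH : H.PosDef)
    (wk wk1 wk2 wbk wbk1 : n → ℝ)
    (h1 : wk - wk1 = M.mulVec (wk - wbk))
    (h2 : wk1 - wk2 = M.mulVec (wk1 - wbk1))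
    (h3 : (wk - wbk) ⬝ᵥ (Mᵀ * H * M).mulVec ((wk - wbk) - (wk1 - wbk1)) ≥
      (1 / 2) * (((wk - wbk) - (wk1 - wbk1)) ⬝ᵥ
        (Qᵀ + Q).mulVec ((wk - wbk) - (wk1 - wbk1))))
    (hN : (Qᵀ + Q - Mᵀ * H * M).PosSemidef) :
    (wk1 - wk2) ⬝ᵥ H.mulVec (wk1 - wk2) ≤ (wk - wk1) ⬝ᵥ H.mulVec (wk - wk1) := by
  have hHsymm : H.IsSymm := isHermitian_iff_isSymm.mp hH.isHermitian
  rw [h1, h2, mulVec_dotProduct_mulVec_mulVec, mulVec_dotProduct_mulVec_mulVec]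
  exact (hHsymm.transpose_mul_mul M).dotProduct_mulVec_self_le
    hN.dotProduct_mulVec_le_of_sub h3

theorem stmt10
    {n : Type*} [Fintype n] [DecidableEq n]
    (H M Q : Matrix n n ℝ) (hH : H.PosDef) (hQ : Q = H * M)
    (wk wk1 wk2 wbk wbk1 : n → ℝ)
    (h1 : wk - wk1 = M.mulVec (wk - wbk))
    (h2 : wk1 - wk2 = M.mulVec (wk1 - wbk1))
    (h3 : (wk - wbk) ⬝ᵥ (Mᵀ * H * M).mulVec ((wk - wbk) - (wk1 - wbk1)) ≥
      (1 / 2) * (((wk - wbk) - (wk1 - wbk1)) ⬝ᵥ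
        (Qᵀ + Q).mulVec ((wk - wbk) - (wk1 - wbk1))))
    (hN : (Qᵀ + Q - Mᵀ * H * M).PosSemidef) :
    (wk1 - wk2) ⬝ᵥ H.mulVec (wk1 - wk2) ≤ (wk - wk1) ⬝ᵥ H.mulVec (wk - wk1) :=
  stmt10_general H M Q hH wk wk1 wk2 wbk wbk1 h1 h2 h3 hN
end

section
/- Let θ be a convex function on ℝⁿ and F monotone affine-free map on a convex set W. Suppose for each k: θ(u) − θ(ūᵏ) + (w − w̄ᵏ)ᵀF(w) ≥ ½(‖wᵏ⁺¹ − w‖²_H − ‖wᵏ − w‖²_H) for all w ∈ W. Then for w_t := (1/(t+1)) Σ_{k=0}^{t} w̄ᵏ, one has θ(u_t) − θ(u) + (w_t − w)ᵀF(w) ≤ ‖w − w⁰‖²_H / (2(t+1)) for all w ∈ W. -/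
/-!
Fix `w ∈ W`. The gap function `g v = θ v - θ w + (v - w) ⬝ᵥ F w` is convex on `W`, and the
hypothesis says `g (w̄ᵏ) ≤ Qₖ - Qₖ₊₁` with `Qₖ = ½ ‖wᵏ - w‖²_H ≥ 0`. Jensen's inequality for the
uniform average then bounds `g (w_t)` by the mean of the telescoping sum, i.e. by `Q₀ / (t + 1)`.
-/

open Matrix

open Finset in
theorem ConvexOn.map_average_le_of_le_sub_succ {E : Type*} [AddCommGroup E] [Module ℝ E]
    {s : Set E} {g : E → ℝ} (hg : ConvexOn ℝ s g) {x : ℕ → E} (hx : ∀ k, x k ∈ s)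
    {Q : ℕ → ℝ} (hQ : ∀ k, g (x k) ≤ Q k - Q (k + 1)) (t : ℕ) (hQt : 0 ≤ Q (t + 1)) :
    g (((t : ℝ) + 1)⁻¹ • ∑ k ∈ range (t + 1), x k) ≤ Q 0 / ((t : ℝ) + 1) := by
  have hweights : ∑ _k ∈ range (t + 1), ((t : ℝ) + 1)⁻¹ = 1 := by
    rw [sum_const, card_range, nsmul_eq_mul]; push_cast; field_simp
  have hjensen := hg.map_sum_le (t := range (t + 1)) (p := x) (fun _ _ => by positivity)
    hweights (fun k _ => hx k)
  have htelescope : ∑ k ∈ range (t + 1), g (x k) ≤ Q 0 - Q (t + 1) :=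
    (sum_le_sum fun k _ => hQ k).trans_eq (sum_range_sub' Q (t + 1))
  rw [← smul_sum, ← smul_sum, smul_eq_mul] at hjensen
  calc _ ≤ ((t : ℝ) + 1)⁻¹ * ∑ k ∈ range (t + 1), g (x k) := hjensen
    _ ≤ ((t : ℝ) + 1)⁻¹ * Q 0 := by gcongr; linarith
    _ = Q 0 / ((t : ℝ) + 1) := inv_mul_eq_div _ _

theorem ConvexOn.sub_const_add_dotProduct {n : Type*} [Fintype n] {W : Set (n → ℝ)}
    {θ : (n → ℝ) → ℝ} (hθ : ConvexOn ℝ W θ) (w c : n → ℝ) :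
    ConvexOn ℝ W fun v => θ v - θ w + (v - w) ⬝ᵥ c := by
  refine ((hθ.add (((dotProductBilin ℝ ℝ).flip c).convexOn hθ.1)).add_const
    (-(θ w + w ⬝ᵥ c))).congr fun v _ => ?_
  simp only [Pi.add_apply, LinearMap.flip_apply, dotProductBilin_apply_apply, sub_dotProduct]
  ring

theorem dotProduct_mulVec_sub_comm {n : Type*} [Fintype n] (H : Matrix n n ℝ) (v w : n → ℝ) :
    (v - w) ⬝ᵥ H *ᵥ (v - w) = (w - v) ⬝ᵥ H *ᵥ (w - v) := by
  rw [← neg_sub w v, neg_dotProduct, mulVec_neg, dotProduct_neg, neg_neg]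

theorem stmt14_general
    {n : Type*} [Fintype n]
    (W : Set (n → ℝ))
    (θ : (n → ℝ) → ℝ) (hθ : ConvexOn ℝ W θ)
    (F : (n → ℝ) → (n → ℝ))
    (H : Matrix n n ℝ) (hH : H.PosSemidef)
    (wk : ℕ → (n → ℝ)) (wb : ℕ → (n → ℝ)) (hwb : ∀ k, wb k ∈ W)
    (hkey : ∀ k, ∀ w ∈ W,
      θ w - θ (wb k) + (w - wb k) ⬝ᵥ F w ≥
        (1 / 2) * ((wk (k + 1) - w) ⬝ᵥ H.mulVec (wk (k + 1) - w)
          - (wk k - w) ⬝ᵥ H.mulVec (wk k - w)))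
    (t : ℕ)
    (wt : n → ℝ) (hwt : wt = ((t : ℝ) + 1)⁻¹ • ∑ k ∈ Finset.range (t + 1), wb k) :
    ∀ w ∈ W,
      θ wt - θ w + (wt - w) ⬝ᵥ F w ≤
        (w - wk 0) ⬝ᵥ H.mulVec (w - wk 0) / (2 * ((t : ℝ) + 1)) := by
  intro w hw
  set Q : ℕ → ℝ := fun k => (wk k - w) ⬝ᵥ H *ᵥ (wk k - w) / 2
  have hdecrease : ∀ k, θ (wb k) - θ w + (wb k - w) ⬝ᵥ F w ≤ Q k - Q (k + 1) := by
    intro k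
    have hstep := hkey k w hw
    rw [← neg_sub (wb k) w, neg_dotProduct] at hstep
    simp only [Q]
    linarith
  have hbound := (hθ.sub_const_add_dotProduct w (F w)).map_average_le_of_le_sub_succ
    hwb hdecrease t (by have := hH.dotProduct_mulVec_nonneg (wk (t + 1) - w); positivity)
  rw [hwt, dotProduct_mulVec_sub_comm]
  convert hbound using 1
  simp only [Q]
  field_simp

theorem stmt14
    {n : Type*} [Fintype n] [DecidableEq n]
    (W : Set (n → ℝ)) (hW : Convex ℝ W)
    (θ : (n → ℝ) → ℝ) (hθ : ConvexOn ℝ W θ)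
    (F : (n → ℝ) → (n → ℝ))
    (hF : ∀ w₁ ∈ W, ∀ w₂ ∈ W, 0 ≤ (w₁ - w₂) ⬝ᵥ (F w₁ - F w₂))
    (H : Matrix n n ℝ) (hH : H.PosSemidef)
    (wk : ℕ → (n → ℝ)) (wb : ℕ → (n → ℝ)) (hwb : ∀ k, wb k ∈ W)
    (hkey : ∀ k, ∀ w ∈ W,
      θ w - θ (wb k) + (w - wb k) ⬝ᵥ F w ≥
        (1 / 2) * ((wk (k + 1) - w) ⬝ᵥ H.mulVec (wk (k + 1) - w)
          - (wk k - w) ⬝ᵥ H.mulVec (wk k - w)))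
    (t : ℕ)
    (wt : n → ℝ) (hwt : wt = ((t : ℝ) + 1)⁻¹ • ∑ k ∈ Finset.range (t + 1), wb k) :
    ∀ w ∈ W,
      θ wt - θ w + (wt - w) ⬝ᵥ F w ≤
        (w - wk 0) ⬝ᵥ H.mulVec (w - wk 0) / (2 * ((t : ℝ) + 1)) :=
  stmt14_general W θ hθ F H hH wk wb hwb hkey t wt hwt
end

section
/- Let θ_m: ℝ^{n_m} → ℝ be convex with subdifferential ∂θ_m, P_m symmetric positive semidefinite, and A_m ∈ ℝ^{ℓ×n_m}. If ξ ∈ ∂θ_m(x^{k+1}) satisfies (x − x^{k+1})ᵀ(ξ − A_mᵀ y^{k+1} + P_m(x^{k+1} − xᵏ)) ≥ 0 for all x ∈ X_m, and ζ ∈ ∂θ_m(xᵏ) satisfies (x − xᵏ)ᵀ(ζ − A_mᵀ yᵏ + P_m(xᵏ − x^{k−1})) ≥ 0 for all x ∈ X_m, then (xᵏ − x^{k+1})ᵀ A_mᵀ (yᵏ − y^{k+1}) ≥ ½‖xᵏ − x^{k+1}‖²_{P_m} − ½‖x^{k−1} − xᵏ‖²_{P_m}. -/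
/-!
Adding the two variational inequalities, tested at `x = xᵏ` and `x = xᵏ⁺¹` respectively, leaves
the subgradient term `(xᵏ - xᵏ⁺¹)ᵀ(ξ - ζ)`, which is nonpositive by monotonicity of `∂θ_m`, and the
cross term `(xᵏ - xᵏ⁺¹)ᵀ P_m (xᵏ - xᵏ⁻¹)`, which is bounded below by
`-½‖xᵏ - xᵏ⁺¹‖²_{P_m} - ½‖xᵏ⁻¹ - xᵏ‖²_{P_m}` since `P_m` is a positive semidefinite form.
-/

open Matrix

section

variable {n : Type*} [Fintype n]

theorem dotProduct_sub_nonneg_of_subgradients {f : (n → ℝ) → ℝ} {x y g h : n → ℝ}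
    (hg : ∀ z, f x + (z - x) ⬝ᵥ g ≤ f z) (hh : ∀ z, f y + (z - y) ⬝ᵥ h ≤ f z) :
    0 ≤ (x - y) ⬝ᵥ (g - h) := by
  have hgy := hg y
  have hhx := hh x
  rw [← neg_sub x y, neg_dotProduct] at hgy
  rw [dotProduct_sub]
  linarith

theorem Matrix.IsSymm.dotProduct_mulVec_comm_s16 {R : Type*} [CommSemiring R] {A : Matrix n n R}
    (hA : A.IsSymm) (u v : n → R) : u ⬝ᵥ A *ᵥ v = v ⬝ᵥ A *ᵥ u := by
  rw [dotProduct_mulVec, ← mulVec_transpose, hA.eq, dotProduct_comm]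

theorem Matrix.PosSemidef.two_mul_dotProduct_mulVec_le {P : Matrix n n ℝ} (hP : P.PosSemidef)
    (u v : n → ℝ) : 2 * (u ⬝ᵥ P *ᵥ v) ≤ u ⬝ᵥ P *ᵥ u + v ⬝ᵥ P *ᵥ v := by
  have hnonneg : 0 ≤ (u - v) ⬝ᵥ P *ᵥ (u - v) := by
    simpa only [star_trivial] using hP.dotProduct_mulVec_nonneg (u - v)
  have hsymm := (isHermitian_iff_isSymm.mp hP.1).dotProduct_mulVec_comm_s16 v u
  simp only [mulVec_sub, dotProduct_sub, sub_dotProduct] at hnonneg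
  linarith

end

theorem stmt16_general
    {nm ℓ : Type*} [Fintype nm] [Fintype ℓ]
    (θm : (nm → ℝ) → ℝ)
    (Pm : Matrix nm nm ℝ) (hPm : Pm.PosSemidef)
    (A : Matrix ℓ nm ℝ)
    (Xm : Set (nm → ℝ))
    (xkm1 xk xk1 : nm → ℝ) (hxk : xk ∈ Xm) (hxk1 : xk1 ∈ Xm)
    (yk yk1 : ℓ → ℝ)
    (ξ ζ : nm → ℝ)
    (hξsub : ∀ z, θm z ≥ θm xk1 + (z - xk1) ⬝ᵥ ξ)
    (hζsub : ∀ z, θm z ≥ θm xk + (z - xk) ⬝ᵥ ζ)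
    (hξ : ∀ x ∈ Xm, (x - xk1) ⬝ᵥ (ξ - Aᵀ.mulVec yk1 + Pm.mulVec (xk1 - xk)) ≥ 0)
    (hζ : ∀ x ∈ Xm, (x - xk) ⬝ᵥ (ζ - Aᵀ.mulVec yk + Pm.mulVec (xk - xkm1)) ≥ 0) :
    (xk - xk1) ⬝ᵥ Aᵀ.mulVec (yk - yk1) ≥
      (1 / 2) * ((xk - xk1) ⬝ᵥ Pm.mulVec (xk - xk1))
      - (1 / 2) * ((xkm1 - xk) ⬝ᵥ Pm.mulVec (xkm1 - xk)) := by
  have hmono := dotProduct_sub_nonneg_of_subgradients hζsub hξsub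
  have hvar₁ := hξ xk hxk
  have hvar₂ := hζ xk1 hxk1
  have hcross := hPm.two_mul_dotProduct_mulVec_le (xk - xk1) (xkm1 - xk)
  rw [← neg_sub xk xk1] at hvar₁ hvar₂
  rw [← neg_sub xkm1 xk] at hvar₂
  simp only [dotProduct_add, dotProduct_sub, dotProduct_neg, neg_dotProduct, mulVec_neg,
    mulVec_sub Aᵀ yk yk1] at hmono hvar₁ hvar₂ ⊢
  linarith

theorem stmt16
    {nm ℓ : Type*} [Fintype nm] [Fintype ℓ]
    (θm : (nm → ℝ) → ℝ) (hθm : ConvexOn ℝ Set.univ θm)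
    (Pm : Matrix nm nm ℝ) (hPm : Pm.PosSemidef)
    (A : Matrix ℓ nm ℝ)
    (Xm : Set (nm → ℝ)) (hXm : Convex ℝ Xm)
    (xkm1 xk xk1 : nm → ℝ) (hxkm1 : xkm1 ∈ Xm) (hxk : xk ∈ Xm) (hxk1 : xk1 ∈ Xm)
    (yk yk1 : ℓ → ℝ)
    (ξ ζ : nm → ℝ)
    (hξsub : ∀ z, θm z ≥ θm xk1 + (z - xk1) ⬝ᵥ ξ)
    (hζsub : ∀ z, θm z ≥ θm xk + (z - xk) ⬝ᵥ ζ)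
    (hξ : ∀ x ∈ Xm, (x - xk1) ⬝ᵥ (ξ - Aᵀ.mulVec yk1 + Pm.mulVec (xk1 - xk)) ≥ 0)
    (hζ : ∀ x ∈ Xm, (x - xk) ⬝ᵥ (ζ - Aᵀ.mulVec yk + Pm.mulVec (xk - xkm1)) ≥ 0) :
    (xk - xk1) ⬝ᵥ Aᵀ.mulVec (yk - yk1) ≥
      (1 / 2) * ((xk - xk1) ⬝ᵥ Pm.mulVec (xk - xk1))
      - (1 / 2) * ((xkm1 - xk) ⬝ᵥ Pm.mulVec (xkm1 - xk)) :=
  stmt16_general θm Pm hPm A Xm xkm1 xk xk1 hxk hxk1 yk yk1 ξ ζ hξsub hζsub hξ hζ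
end
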